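/- In the coupled MLEnKF / mean-field-shadow setting, for every n ∈ ℕ and p ≥ 2: ‖C^{ML}_n − C̄^{ML}_n‖_{L^p(Ω;𝓗⊗𝓗)} ≤ 4 Σ_{ℓ=0}^L ‖v^ℓ_n − v̄^ℓ_n‖_{L^{2p}(Ω;𝓗)} (‖v^ℓ_n‖_{L^{2p}(Ω;𝓗)} + ‖v̄^ℓ_n‖_{L^{2p}(Ω;𝓗)}), where v^ℓ_n and v̄^ℓ_n denote (any one of) the identically distributed level-ℓ prediction particles of the MLEnKF ensemble and of the mean-field shadow ensemble, respectively, and C^{ML}_n, C̄^{ML}_n are the corresponding multilevel sample covariances. -/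

import Mathlib

/-!
Writing the sample covariance as the U-statistic
`cov_M[u] = (2 M (M-1))⁻¹ ∑_{i ≠ j} (u_i - u_j) ⊗ (u_i - u_j)` and using
`a ⊗ a - b ⊗ b = a ⊗ (a - b) + (a - b) ⊗ b`, the Hilbert–Schmidt norm of `C^ML - C̄^ML` is
dominated pointwise by a sum over levels and ordered pairs `i ≠ j` of
`‖Δ_i - Δ_j‖ (‖u_i - u_j‖ + ‖w_i - w_j‖)`, where `Δ = u - w`. Hölder with exponents
`(2p, 2p)` and Minkowski bound each pair in `L^p` by `4 ‖v - v̄‖_{2p} (‖v‖_{2p} + ‖v̄‖_{2p})`,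
so with `M (M-1)` pairs each ensemble contributes twice that quantity. The coarse ensemble at
level `ℓ + 1` is distributed like the fine one at level `ℓ` and vanishes at level `0`, which
gives the factor `4`.
-/

open MeasureTheory ProbabilityTheory ContinuousLinearMap Finset
open scoped RealInnerProductSpace ENNReal

/-- The `L^p(Ω;𝓗)`-norm of a random variable, for a real exponent `p`. -/
noncomputable def lpNorm {Ω : Type*} [MeasurableSpace Ω] (μ : Measure Ω)
    {H : Type*} [NormedAddCommGroup H] (p : ℝ) (u : Ω → H) : ℝ :=
  (∫ ω, ‖u ω‖ ^ p ∂μ) ^ (1 / p)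

/-- Hilbert–Schmidt norm of an operator on `𝓗`, computed in the orthonormal basis `e`. -/
noncomputable def hsNorm {H : Type*} [NormedAddCommGroup H] [InnerProductSpace ℝ H]
    (e : HilbertBasis ℕ ℝ H) (T : H →L[ℝ] H) : ℝ :=
  Real.sqrt (∑' k, ‖T (e k)‖ ^ 2)

/-- The `L^p(Ω; 𝓗⊗𝓗)`-norm of an operator-valued random variable. -/
noncomputable def lpNormHS {Ω : Type*} [MeasurableSpace Ω] (μ : Measure Ω)
    {H : Type*} [NormedAddCommGroup H] [InnerProductSpace ℝ H]
    (e : HilbertBasis ℕ ℝ H) (p : ℝ) (T : Ω → H →L[ℝ] H) : ℝ :=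
  (∫ ω, hsNorm e (T ω) ^ p ∂μ) ^ (1 / p)

/-- The rank-one operator `x ⊗ x`. -/
noncomputable def outer {E : Type*} [NormedAddCommGroup E] [InnerProductSpace ℝ E]
    (x : E) : E →L[ℝ] E :=
  (innerSL ℝ x).smulRight x

/-- The sample covariance `cov_M[u] = (M/(M−1)) (E_M[u⊗u] − E_M[u] ⊗ E_M[u])`. -/
noncomputable def sampleCov {Ω : Type*} {H : Type*} [NormedAddCommGroup H]
    [InnerProductSpace ℝ H] (M : ℕ) (u : Fin M → Ω → H) (ω : Ω) : H →L[ℝ] H :=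
  ((M : ℝ) / ((M : ℝ) - 1)) •
    ((M : ℝ)⁻¹ • (∑ i, outer (u i ω)) - outer ((M : ℝ)⁻¹ • ∑ i, u i ω))

lemma ENNReal.holderTriple_two_mul (q : ℝ≥0∞) : ENNReal.HolderTriple (2 * q) (2 * q) q where
  inv_add_inv_eq_inv := by
    rw [← two_mul, ENNReal.mul_inv (by simp) (by simp), ← mul_assoc,
      ENNReal.mul_inv_cancel two_ne_zero ENNReal.ofNat_ne_top, one_mul]

lemma Finset.sum_range_le_sum_range_of_shift {α : Type*} [AddCommMonoid α] [PartialOrder α]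
    [CanonicallyOrderedAdd α] [IsOrderedAddMonoid α] {a b : ℕ → α} (L : ℕ) (hb₀ : b 0 = 0)
    (hb : ∀ ℓ, b (ℓ + 1) ≤ a ℓ) :
    ∑ ℓ ∈ range (L + 1), b ℓ ≤ ∑ ℓ ∈ range (L + 1), a ℓ := by
  rw [sum_range_succ', hb₀, add_zero]
  exact (sum_le_sum fun ℓ _ => hb ℓ).trans (sum_le_sum_of_subset (range_subset_range.2 L.le_succ))

section HilbertSchmidt

variable {H : Type*} [NormedAddCommGroup H] [InnerProductSpace ℝ H] (e : HilbertBasis ℕ ℝ H)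

/-- `hsNorm e` is a norm only on this submodule: outside it the `tsum` takes the junk value `0`. -/
noncomputable def hilbertSchmidt : Submodule ℝ (H →L[ℝ] H) :=
  (lpSubmodule ℝ (fun _ : ℕ => H) 2).comap
    (LinearMap.pi fun k => (ContinuousLinearMap.apply ℝ H (e k)).toLinearMap)

lemma hsNorm_nonneg (T : H →L[ℝ] H) : 0 ≤ hsNorm e T := Real.sqrt_nonneg _

lemma hsNorm_smul (c : ℝ) (T : H →L[ℝ] H) : hsNorm e (c • T) = |c| * hsNorm e T := by
  simp only [hsNorm, smul_apply, norm_smul, mul_pow, Real.norm_eq_abs, sq_abs, tsum_mul_left]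
  rw [Real.sqrt_mul (sq_nonneg c), Real.sqrt_sq_eq_abs]

lemma hsNorm_neg (T : H →L[ℝ] H) : hsNorm e (-T) = hsNorm e T := by
  simp [hsNorm]

lemma HilbertBasis.hasSum_inner_sq (x : H) : HasSum (fun k => ⟪x, e k⟫ ^ 2) (‖x‖ ^ 2) := by
  simpa [sq, real_inner_comm x, real_inner_self_eq_norm_sq] using e.hasSum_inner_mul_inner x x

lemma hasSum_norm_rankOne_sq (x y : H) :
    HasSum (fun k => ‖InnerProductSpace.rankOne ℝ x y (e k)‖ ^ 2) (‖x‖ ^ 2 * ‖y‖ ^ 2) := by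
  simpa [norm_smul, mul_pow, mul_comm] using (e.hasSum_inner_sq y).mul_left (‖x‖ ^ 2)

lemma rankOne_mem_hilbertSchmidt (x y : H) :
    InnerProductSpace.rankOne ℝ x y ∈ hilbertSchmidt e :=
  memℓp_gen <| by simpa using (hasSum_norm_rankOne_sq e x y).summable

lemma hsNorm_rankOne (x y : H) : hsNorm e (InnerProductSpace.rankOne ℝ x y) = ‖x‖ * ‖y‖ := by
  rw [hsNorm, (hasSum_norm_rankOne_sq e x y).tsum_eq, ← mul_pow, Real.sqrt_sq (by positivity)]

variable {e}

lemma hsNorm_eq_norm_lp {T : H →L[ℝ] H} (hT : T ∈ hilbertSchmidt e) :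
    hsNorm e T = ‖(⟨fun k => T (e k), hT⟩ : lp (fun _ : ℕ => H) 2)‖ := by
  rw [lp.norm_eq_tsum_rpow (by norm_num), hsNorm, Real.sqrt_eq_rpow]
  norm_num

lemma hsNorm_add_le {S T : H →L[ℝ] H} (hS : S ∈ hilbertSchmidt e) (hT : T ∈ hilbertSchmidt e) :
    hsNorm e (S + T) ≤ hsNorm e S + hsNorm e T := by
  rw [hsNorm_eq_norm_lp hS, hsNorm_eq_norm_lp hT, hsNorm_eq_norm_lp (add_mem hS hT)]
  exact norm_add_le (⟨_, hS⟩ : lp (fun _ : ℕ => H) 2) ⟨_, hT⟩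

lemma hsNorm_sub_le {S T : H →L[ℝ] H} (hS : S ∈ hilbertSchmidt e) (hT : T ∈ hilbertSchmidt e) :
    hsNorm e (S - T) ≤ hsNorm e S + hsNorm e T := by
  simpa [sub_eq_add_neg, hsNorm_neg] using hsNorm_add_le hS (neg_mem hT)

lemma hsNorm_sum_le {ι : Type*} (s : Finset ι) {T : ι → H →L[ℝ] H}
    (hT : ∀ i ∈ s, T i ∈ hilbertSchmidt e) :
    hsNorm e (∑ i ∈ s, T i) ≤ ∑ i ∈ s, hsNorm e (T i) :=
  le_sum_of_subadditive_on_pred (hsNorm e) (· ∈ hilbertSchmidt e) (by simp [hsNorm])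
    (fun _ _ => hsNorm_add_le) (fun _ _ => add_mem) T hT

end HilbertSchmidt

section SampleCovariance

variable {H : Type*} [NormedAddCommGroup H] [InnerProductSpace ℝ H]

open InnerProductSpace

lemma outer_eq_rankOne (x : H) : outer x = rankOne ℝ x x := rfl

lemma outer_sub_outer (a b : H) :
    outer a - outer b = rankOne ℝ a (a - b) + rankOne ℝ (a - b) b := by
  simp only [outer_eq_rankOne, map_sub, sub_apply]
  abel

lemma hsNorm_outer_sub_outer_le (e : HilbertBasis ℕ ℝ H) (a b : H) :
    hsNorm e (outer a - outer b) ≤ ‖a - b‖ * (‖a‖ + ‖b‖) := by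
  rw [outer_sub_outer]
  refine (hsNorm_add_le (rankOne_mem_hilbertSchmidt e _ _)
    (rankOne_mem_hilbertSchmidt e _ _)).trans_eq ?_
  rw [hsNorm_rankOne e, hsNorm_rankOne e]
  ring

lemma outer_mem_hilbertSchmidt (e : HilbertBasis ℕ ℝ H) (x : H) : outer x ∈ hilbertSchmidt e :=
  rankOne_mem_hilbertSchmidt e x x

lemma sum_sum_outer_sub {M : ℕ} (u : Fin M → H) :
    ∑ i, ∑ j, outer (u i - u j) = (2 * M : ℝ) • ∑ i, outer (u i) - (2 : ℝ) • outer (∑ i, u i) := by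
  simp only [outer_eq_rankOne, map_sub, sub_apply, sum_sub_distrib, map_sum, _root_.sum_apply,
    sum_const, card_univ, Fintype.card_fin]
  rw [sum_comm (f := fun i j => rankOne ℝ (u i) (u j)), ← smul_sum]
  module

lemma outer_smul (c : ℝ) (x : H) : outer (c • x) = c ^ 2 • outer x := by
  simp only [outer_eq_rankOne, map_smul, smul_apply, smul_smul, sq]

lemma sum_offDiag_outer_sub {M : ℕ} (u : Fin M → H) :
    ∑ x ∈ (univ : Finset (Fin M)).offDiag, outer (u x.1 - u x.2) = ∑ i, ∑ j, outer (u i - u j) := by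
  rw [← sum_product', univ_product_univ]
  refine sum_subset (subset_univ _) fun x _ hx => ?_
  have : x.1 = x.2 := by simpa using hx
  simp [this, outer]

/-- For `M ≤ 1` both sides vanish, through division by zero. -/
lemma sampleCov_eq_sum_offDiag {Ω : Type*} (M : ℕ) (u : Fin M → Ω → H) (ω : Ω) :
    sampleCov M u ω = (2 * (#(univ : Finset (Fin M)).offDiag : ℝ))⁻¹ •
      ∑ x ∈ (univ : Finset (Fin M)).offDiag, outer (u x.1 ω - u x.2 ω) := by
  rw [sum_offDiag_outer_sub (u · ω), sum_sum_outer_sub, offDiag_card, card_univ, Fintype.card_fin,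
    Nat.cast_sub (Nat.le_mul_self M), sampleCov, outer_smul]
  push_cast
  rcases lt_or_ge M 2 with hM | hM
  · interval_cases M <;> simp
  have : (2 : ℝ) ≤ M := by exact_mod_cast hM
  match_scalars <;> field_simp

lemma sampleCov_mem_hilbertSchmidt (e : HilbertBasis ℕ ℝ H) {Ω : Type*} (M : ℕ)
    (u : Fin M → Ω → H) (ω : Ω) : sampleCov M u ω ∈ hilbertSchmidt e :=
  Submodule.smul_mem _ _ <| sub_mem
    (Submodule.smul_mem _ _ (sum_mem fun _ _ => outer_mem_hilbertSchmidt e _))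
    (outer_mem_hilbertSchmidt e _)

end SampleCovariance

noncomputable def covDiscrepancy {E : Type*} [NormedAddCommGroup E] (M : ℕ) (u w : Fin M → E) : ℝ :=
  (2 * (#(univ : Finset (Fin M)).offDiag : ℝ))⁻¹ * ∑ x ∈ (univ : Finset (Fin M)).offDiag,
    ‖(u x.1 - w x.1) - (u x.2 - w x.2)‖ * (‖u x.1 - u x.2‖ + ‖w x.1 - w x.2‖)

section Domination

variable {Ω : Type*} {H : Type*} [NormedAddCommGroup H] [InnerProductSpace ℝ H]
  (e : HilbertBasis ℕ ℝ H)

lemma hsNorm_sampleCov_sub_le (M : ℕ) (u w : Fin M → Ω → H) (ω : Ω) :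
    hsNorm e (sampleCov M u ω - sampleCov M w ω) ≤ covDiscrepancy M (u · ω) (w · ω) := by
  rw [sampleCov_eq_sum_offDiag, sampleCov_eq_sum_offDiag, ← smul_sub, ← sum_sub_distrib,
    hsNorm_smul, abs_of_nonneg (by positivity), covDiscrepancy]
  gcongr
  refine (hsNorm_sum_le _ fun x _ => sub_mem (outer_mem_hilbertSchmidt e _)
    (outer_mem_hilbertSchmidt e _)).trans (sum_le_sum fun x _ => ?_)
  refine (hsNorm_outer_sub_outer_le e _ _).trans_eq ?_
  rw [sub_sub_sub_comm]

lemma hsNorm_sum_sampleCov_sub_le {ι : Type*} (s : Finset ι) (M : ι → ℕ)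
    (u u' w w' : (ℓ : ι) → Fin (M ℓ) → Ω → H) (ω : Ω) :
    hsNorm e (∑ ℓ ∈ s, (sampleCov (M ℓ) (u ℓ) ω - sampleCov (M ℓ) (u' ℓ) ω)
        - ∑ ℓ ∈ s, (sampleCov (M ℓ) (w ℓ) ω - sampleCov (M ℓ) (w' ℓ) ω))
      ≤ ∑ ℓ ∈ s, (covDiscrepancy (M ℓ) (u ℓ · ω) (w ℓ · ω)
        + covDiscrepancy (M ℓ) (u' ℓ · ω) (w' ℓ · ω)) := by
  have hmem := sampleCov_mem_hilbertSchmidt e (Ω := Ω) (H := H)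
  rw [← sum_sub_distrib]
  refine (hsNorm_sum_le s fun ℓ _ => sub_mem (sub_mem (hmem ..) (hmem ..))
    (sub_mem (hmem ..) (hmem ..))).trans (sum_le_sum fun ℓ _ => ?_)
  rw [sub_sub_sub_comm]
  exact (hsNorm_sub_le (sub_mem (hmem ..) (hmem ..)) (sub_mem (hmem ..) (hmem ..))).trans
    (add_le_add (hsNorm_sampleCov_sub_le e ..) (hsNorm_sampleCov_sub_le e ..))

end Domination

section Moments

variable {Ω : Type*} [MeasurableSpace Ω] {μ : Measure Ω} {E : Type*} [NormedAddCommGroup E]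

lemma ofReal_lpNorm_le_eLpNorm {p : ℝ} (hp : 0 < p) (u : Ω → E) :
    ENNReal.ofReal (lpNorm μ p u) ≤ eLpNorm u (ENNReal.ofReal p) μ := by
  rw [eLpNorm_eq_lintegral_rpow_enorm_toReal (by simpa using hp) ENNReal.ofReal_ne_top,
    ENNReal.toReal_ofReal hp.le, _root_.lpNorm,
    ← ENNReal.ofReal_rpow_of_nonneg (integral_nonneg fun _ => by positivity) (by positivity)]
  gcongr
  calc ENNReal.ofReal (∫ ω, ‖u ω‖ ^ p ∂μ) = ‖∫ ω, ‖u ω‖ ^ p ∂μ‖ₑ :=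
        (Real.enorm_of_nonneg (integral_nonneg fun _ => by positivity)).symm
    _ ≤ ∫⁻ ω, ‖‖u ω‖ ^ p‖ₑ ∂μ := enorm_integral_le_lintegral_enorm _
    _ = ∫⁻ ω, ‖u ω‖ₑ ^ p ∂μ := by
        simp_rw [Real.enorm_rpow_of_nonneg (norm_nonneg _) hp.le, enorm_norm]

lemma ofReal_lpNorm {p : ℝ} (hp : 0 < p) {u : Ω → E} (hu : MemLp u (ENNReal.ofReal p) μ) :
    ENNReal.ofReal (lpNorm μ p u) = eLpNorm u (ENNReal.ofReal p) μ := by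
  rw [hu.eLpNorm_eq_integral_rpow_norm (by simpa using hp) ENNReal.ofReal_ne_top,
    ENNReal.toReal_ofReal hp.le, _root_.lpNorm, one_div]

lemma lpNorm_nonneg (p : ℝ) (u : Ω → E) : 0 ≤ lpNorm μ p u := by
  rw [_root_.lpNorm]
  positivity

lemma ofReal_four_mul_sum_lpNorm {p : ℝ} (hp : 0 < p) {s : Finset ℕ} {u w : ℕ → Ω → E}
    (hu : ∀ i, MemLp (u i) (.ofReal p) μ) (hw : ∀ i, MemLp (w i) (.ofReal p) μ) :
    ENNReal.ofReal (4 * ∑ i ∈ s, lpNorm μ p (fun ω => u i ω - w i ω) *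
        (lpNorm μ p (u i) + lpNorm μ p (w i)))
      = 4 * ∑ i ∈ s, eLpNorm (fun ω => u i ω - w i ω) (.ofReal p) μ *
        (eLpNorm (u i) (.ofReal p) μ + eLpNorm (w i) (.ofReal p) μ) := by
  have h := _root_.lpNorm_nonneg (μ := μ) p (E := E)
  rw [ENNReal.ofReal_mul zero_le_four, ENNReal.ofReal_ofNat,
    ENNReal.ofReal_sum_of_nonneg fun i _ => mul_nonneg (h _) (add_nonneg (h _) (h _))]
  congr 1
  refine sum_congr rfl fun i _ => ?_
  rw [ENNReal.ofReal_mul (h _), ENNReal.ofReal_add (h _) (h _), ofReal_lpNorm hp (hu i),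
    ofReal_lpNorm hp (hw i), ofReal_lpNorm (u := fun ω => u i ω - w i ω) hp ((hu i).sub (hw i))]

lemma lpNormHS_eq_lpNorm {H : Type*} [NormedAddCommGroup H] [InnerProductSpace ℝ H]
    (e : HilbertBasis ℕ ℝ H) (p : ℝ) (T : Ω → H →L[ℝ] H) :
    lpNormHS μ e p T = lpNorm μ p (fun ω => hsNorm e (T ω)) := by
  simp only [lpNormHS, _root_.lpNorm, Real.norm_of_nonneg (hsNorm_nonneg e _)]

lemma eLpNorm_norm_sub_mul_le {q r : ℝ≥0∞} [ENNReal.HolderTriple r r q] (hr : 1 ≤ r)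
    {X Y X' Y' : Ω → E} (hX : AEStronglyMeasurable X μ) (hY : AEStronglyMeasurable Y μ)
    (hX' : AEStronglyMeasurable X' μ) (hY' : AEStronglyMeasurable Y' μ) :
    eLpNorm (fun ω => ‖(X ω - Y ω) - (X' ω - Y' ω)‖ * (‖X ω - X' ω‖ + ‖Y ω - Y' ω‖)) q μ
      ≤ (eLpNorm (X - Y) r μ + eLpNorm (X' - Y') r μ)
        * (eLpNorm X r μ + eLpNorm X' r μ + (eLpNorm Y r μ + eLpNorm Y' r μ)) := by
  calc _ ≤ eLpNorm (fun ω => ‖(X - Y - (X' - Y')) ω‖) r μ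
          * eLpNorm (fun ω => ‖(X - X') ω‖ + ‖(Y - Y') ω‖) r μ :=
        eLpNorm_smul_le_mul_eLpNorm (by fun_prop) (by fun_prop)
    _ ≤ _ := by
        rw [eLpNorm_norm]
        gcongr
        · exact eLpNorm_sub_le (hX.sub hY) (hX'.sub hY') hr
        · refine (eLpNorm_add_le (hX.sub hX').norm (hY.sub hY').norm hr).trans ?_
          rw [eLpNorm_norm, eLpNorm_norm]
          exact add_le_add (eLpNorm_sub_le hX hX' hr) (eLpNorm_sub_le hY hY' hr)

end Moments

lemma ENNReal.ofReal_inv_two_mul_mul_le (n : ℕ) (x : ℝ≥0∞) :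
    ENNReal.ofReal (2 * n : ℝ)⁻¹ * (n * (4 * x)) ≤ 2 * x := by
  rcases n.eq_zero_or_pos with rfl | hn
  · simp
  have hn' : (0 : ℝ) < n := by exact_mod_cast hn
  rw [← mul_assoc, ← mul_assoc, ← ENNReal.ofReal_natCast, ← ENNReal.ofReal_ofNat 4,
    ← ENNReal.ofReal_mul (by positivity), ← ENNReal.ofReal_mul (by positivity)]
  gcongr
  rw [ENNReal.ofReal_le_iff_le_toReal (by simp)]
  field_simp
  norm_num

section Level

variable {Ω : Type*} [MeasurableSpace Ω] {μ : Measure Ω} {E : Type*} [NormedAddCommGroup E]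

lemma aestronglyMeasurable_covDiscrepancy {M : ℕ} {u w : Fin M → Ω → E}
    (hu : ∀ i, AEStronglyMeasurable (u i) μ) (hw : ∀ i, AEStronglyMeasurable (w i) μ) :
    AEStronglyMeasurable (fun ω => covDiscrepancy M (u · ω) (w · ω)) μ := by
  unfold covDiscrepancy
  fun_prop

variable [MeasurableSpace E] [BorelSpace E] [SecondCountableTopology E]

lemma eLpNorm_covDiscrepancy_le {q r : ℝ≥0∞} [ENNReal.HolderTriple r r q] (hq : 1 ≤ q)
    (hr : 1 ≤ r) {M : ℕ} {u w : Fin M → Ω → E} {u₀ w₀ : Ω → E}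
    (hid : ∀ i, IdentDistrib (fun ω => (u i ω, w i ω)) (fun ω => (u₀ ω, w₀ ω)) μ μ) :
    eLpNorm (fun ω => covDiscrepancy M (u · ω) (w · ω)) q μ
      ≤ 2 * (eLpNorm (u₀ - w₀) r μ * (eLpNorm u₀ r μ + eLpNorm w₀ r μ)) := by
  have hu i : AEStronglyMeasurable (u i) μ := (hid i).aemeasurable_fst.fst.aestronglyMeasurable
  have hw i : AEStronglyMeasurable (w i) μ := (hid i).aemeasurable_fst.snd.aestronglyMeasurable
  have hu_eq i : eLpNorm (u i) r μ = eLpNorm u₀ r μ := ((hid i).comp measurable_fst).eLpNorm_eq r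
  have hw_eq i : eLpNorm (w i) r μ = eLpNorm w₀ r μ := ((hid i).comp measurable_snd).eLpNorm_eq r
  have huw_eq i : eLpNorm (u i - w i) r μ = eLpNorm (u₀ - w₀) r μ :=
    ((hid i).comp (measurable_fst.sub measurable_snd)).eLpNorm_eq r
  set X := eLpNorm (u₀ - w₀) r μ * (eLpNorm u₀ r μ + eLpNorm w₀ r μ)
  set pairs := (univ : Finset (Fin M)).offDiag
  set term : Fin M × Fin M → Ω → ℝ := fun x ω =>
    ‖(u x.1 ω - w x.1 ω) - (u x.2 ω - w x.2 ω)‖ * (‖u x.1 ω - u x.2 ω‖ + ‖w x.1 ω - w x.2 ω‖)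
  have hterm : ∀ x ∈ pairs, eLpNorm (term x) q μ ≤ 4 * X := fun x _ =>
    (eLpNorm_norm_sub_mul_le hr (hu _) (hw _) (hu _) (hw _)).trans_eq <| by
      rw [huw_eq, huw_eq, hu_eq, hu_eq, hw_eq, hw_eq]
      ring
  have hcov : (fun ω => covDiscrepancy M (u · ω) (w · ω))
      = (2 * (#pairs : ℝ))⁻¹ • ∑ x ∈ pairs, term x := by
    ext ω
    simp [covDiscrepancy, term, pairs, Finset.sum_apply]
  calc eLpNorm (fun ω => covDiscrepancy M (u · ω) (w · ω)) q μ
      = ENNReal.ofReal (2 * (#pairs : ℝ))⁻¹ * eLpNorm (∑ x ∈ pairs, term x) q μ := by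
        rw [hcov, eLpNorm_const_smul, Real.enorm_of_nonneg (by positivity)]
    _ ≤ ENNReal.ofReal (2 * (#pairs : ℝ))⁻¹ * (#pairs * (4 * X)) := by
        gcongr
        refine (eLpNorm_sum_le (fun x _ => by fun_prop) hq).trans ?_
        simpa using sum_le_card_nsmul pairs _ _ hterm
    _ ≤ 2 * X := ENNReal.ofReal_inv_two_mul_mul_le _ X

lemma eLpNorm_sum_covDiscrepancy_le {q r : ℝ≥0∞} [ENNReal.HolderTriple r r q] (hq : 1 ≤ q)
    (hr : 1 ≤ r) (L : ℕ) (M : ℕ → ℕ) {vF vC wF wC : ℕ → ℕ → Ω → E}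
    (hvC0 : ∀ i ω, vC 0 i ω = 0) (hwC0 : ∀ i ω, wC 0 i ω = 0)
    (hid : ∀ ℓ i, IdentDistrib
      (fun ω => ((vF ℓ i ω, wF ℓ i ω), (vC ℓ i ω, wC ℓ i ω)))
      (fun ω => ((vF ℓ 0 ω, wF ℓ 0 ω), (vC ℓ 0 ω, wC ℓ 0 ω))) μ μ)
    (hcoarse : ∀ ℓ, 1 ≤ ℓ → ∀ i, IdentDistrib
      (fun ω => (vC ℓ i ω, wC ℓ i ω))
      (fun ω => (vF (ℓ - 1) 0 ω, wF (ℓ - 1) 0 ω)) μ μ) :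
    eLpNorm (fun ω => ∑ ℓ ∈ range (L + 1), (covDiscrepancy (M ℓ) (vF ℓ · ω) (wF ℓ · ω)
        + covDiscrepancy (M ℓ) (vC ℓ · ω) (wC ℓ · ω))) q μ
      ≤ 4 * ∑ ℓ ∈ range (L + 1), eLpNorm (fun ω => vF ℓ 0 ω - wF ℓ 0 ω) r μ *
          (eLpNorm (vF ℓ 0) r μ + eLpNorm (wF ℓ 0) r μ) := by
  set fine : ℕ → Ω → ℝ := fun ℓ ω => covDiscrepancy (M ℓ) (vF ℓ · ω) (wF ℓ · ω)
  set coarse : ℕ → Ω → ℝ := fun ℓ ω => covDiscrepancy (M ℓ) (vC ℓ · ω) (wC ℓ · ω)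
  set a : ℕ → ℝ≥0∞ := fun ℓ => eLpNorm (fun ω => vF ℓ 0 ω - wF ℓ 0 ω) r μ *
    (eLpNorm (vF ℓ 0) r μ + eLpNorm (wF ℓ 0) r μ)
  have hfine ℓ : eLpNorm (fine ℓ) q μ ≤ 2 * a ℓ :=
    eLpNorm_covDiscrepancy_le hq hr fun i => (hid ℓ i).comp measurable_fst
  have hcoarse₀ : eLpNorm (coarse 0) q μ = 0 := by simp [coarse, covDiscrepancy, hvC0, hwC0]
  have hcoarse_succ ℓ : eLpNorm (coarse (ℓ + 1)) q μ ≤ 2 * a ℓ :=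
    eLpNorm_covDiscrepancy_le hq hr fun i => by simpa using hcoarse (ℓ + 1) le_add_self i
  have hfine_meas ℓ : AEStronglyMeasurable (fine ℓ) μ :=
    aestronglyMeasurable_covDiscrepancy
      (fun i => (hid ℓ i).aemeasurable_fst.fst.fst.aestronglyMeasurable)
      (fun i => (hid ℓ i).aemeasurable_fst.fst.snd.aestronglyMeasurable)
  have hcoarse_meas ℓ : AEStronglyMeasurable (coarse ℓ) μ :=
    aestronglyMeasurable_covDiscrepancy
      (fun i => (hid ℓ i).aemeasurable_fst.snd.fst.aestronglyMeasurable)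
      (fun i => (hid ℓ i).aemeasurable_fst.snd.snd.aestronglyMeasurable)
  have hsum := eLpNorm_sum_le (s := range (L + 1)) (f := fun ℓ => fine ℓ + coarse ℓ)
    (fun ℓ _ => (hfine_meas ℓ).add (hcoarse_meas ℓ)) hq
  simp only [Finset.sum_fn, Pi.add_apply] at hsum
  calc _ ≤ ∑ ℓ ∈ range (L + 1), (eLpNorm (fine ℓ) q μ + eLpNorm (coarse ℓ) q μ) :=
        hsum.trans (sum_le_sum fun ℓ _ => eLpNorm_add_le (hfine_meas ℓ) (hcoarse_meas ℓ) hq)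
    _ ≤ ∑ ℓ ∈ range (L + 1), 2 * a ℓ + ∑ ℓ ∈ range (L + 1), 2 * a ℓ := by
        rw [sum_add_distrib]
        exact add_le_add (sum_le_sum fun ℓ _ => hfine ℓ)
          (sum_range_le_sum_range_of_shift L hcoarse₀ hcoarse_succ)
    _ = 4 * ∑ ℓ ∈ range (L + 1), a ℓ := by
        rw [← mul_sum, ← two_mul, ← mul_assoc]
        norm_num

end Level

theorem stmt10_general
    {Ω : Type*} [MeasurableSpace Ω] (μ : Measure Ω)
    {H : Type*} [NormedAddCommGroup H] [InnerProductSpace ℝ H]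
    [MeasurableSpace H] [BorelSpace H] [SecondCountableTopology H]
    (e : HilbertBasis ℕ ℝ H)
    (p : ℝ) (hp : 2 ≤ p)
    (L : ℕ) (M : ℕ → ℕ)
    -- the MLEnKF prediction particles (fine/coarse) and their mean-field shadows
    (vF vC wF wC : ℕ → ℕ → Ω → H)
    (hvC0 : ∀ i ω, vC 0 i ω = 0) (hwC0 : ∀ i ω, wC 0 i ω = 0)
    -- particles are identically distributed within each level
    (hid : ∀ ℓ i, IdentDistrib
      (fun ω => ((vF ℓ i ω, wF ℓ i ω), (vC ℓ i ω, wC ℓ i ω)))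
      (fun ω => ((vF ℓ 0 ω, wF ℓ 0 ω), (vC ℓ 0 ω, wC ℓ 0 ω))) μ μ)
    -- the coarse components at level `ℓ ≥ 1` are distributed as the fine ones at `ℓ−1`
    (hcoarse : ∀ ℓ, 1 ≤ ℓ → ∀ i, IdentDistrib
      (fun ω => (vC ℓ i ω, wC ℓ i ω))
      (fun ω => (vF (ℓ - 1) 0 ω, wF (ℓ - 1) 0 ω)) μ μ)
    -- finite `2p`-moments
    (hmomv : ∀ ℓ, MemLp (vF ℓ 0) (ENNReal.ofReal (2 * p)) μ)
    (hmomw : ∀ ℓ, MemLp (wF ℓ 0) (ENNReal.ofReal (2 * p)) μ)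
    -- the two multilevel sample covariances
    (CML CbarML : Ω → H →L[ℝ] H)
    (hCML : ∀ ω, CML ω = ∑ ℓ ∈ Finset.range (L + 1),
      (sampleCov (M ℓ) (fun i : Fin (M ℓ) => vF ℓ i) ω
        - sampleCov (M ℓ) (fun i : Fin (M ℓ) => vC ℓ i) ω))
    (hCbarML : ∀ ω, CbarML ω = ∑ ℓ ∈ Finset.range (L + 1),
      (sampleCov (M ℓ) (fun i : Fin (M ℓ) => wF ℓ i) ω
        - sampleCov (M ℓ) (fun i : Fin (M ℓ) => wC ℓ i) ω)) :
    lpNormHS μ e p (fun ω => CML ω - CbarML ω)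
      ≤ 4 * ∑ ℓ ∈ Finset.range (L + 1),
          lpNorm μ (2 * p) (fun ω => vF ℓ 0 ω - wF ℓ 0 ω) *
            (lpNorm μ (2 * p) (vF ℓ 0) + lpNorm μ (2 * p) (wF ℓ 0)) := by
  have hp0 : 0 < p := by linarith
  have hq : 1 ≤ ENNReal.ofReal p := ENNReal.one_le_ofReal.2 (by linarith)
  have hr : 1 ≤ ENNReal.ofReal (2 * p) := ENNReal.one_le_ofReal.2 (by linarith)
  have : ENNReal.HolderTriple (.ofReal (2 * p)) (.ofReal (2 * p)) (.ofReal p) := by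
    rw [ENNReal.ofReal_mul zero_le_two, ENNReal.ofReal_ofNat]
    exact ENNReal.holderTriple_two_mul _
  have hnonneg := _root_.lpNorm_nonneg (μ := μ) (2 * p) (E := H)
  rw [← ENNReal.ofReal_le_ofReal_iff (mul_nonneg zero_le_four (sum_nonneg fun ℓ _ =>
      mul_nonneg (hnonneg _) (add_nonneg (hnonneg _) (hnonneg _)))),
    ofReal_four_mul_sum_lpNorm (by positivity) hmomv hmomw, lpNormHS_eq_lpNorm]
  calc ENNReal.ofReal (lpNorm μ p fun ω => hsNorm e (CML ω - CbarML ω))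
      ≤ eLpNorm (fun ω => hsNorm e (CML ω - CbarML ω)) (.ofReal p) μ :=
        ofReal_lpNorm_le_eLpNorm hp0 _
    _ ≤ eLpNorm (fun ω => ∑ ℓ ∈ range (L + 1), (covDiscrepancy (M ℓ) (vF ℓ · ω) (wF ℓ · ω)
          + covDiscrepancy (M ℓ) (vC ℓ · ω) (wC ℓ · ω))) (.ofReal p) μ := by
        refine eLpNorm_mono_real fun ω => ?_
        rw [Real.norm_of_nonneg (hsNorm_nonneg e _), hCML, hCbarML]
        exact hsNorm_sum_sampleCov_sub_le e _ M _ _ _ _ ω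
    _ ≤ _ := eLpNorm_sum_covDiscrepancy_le hq hr L M hvC0 hwC0 hid hcoarse

/-- Lemma 3.6: in the coupled MLEnKF / mean-field-shadow setting, at a
fixed observation time `n`, the multilevel sample covariances of the MLEnKF prediction
ensemble `{v^ℓ_n(ω_{ℓ,i}), v^{ℓ−1}_n(ω_{ℓ,i})}` (here `vF ℓ i`, `vC ℓ i`) and of its
mean-field shadow `{v̄^ℓ_n(ω_{ℓ,i}), v̄^{ℓ−1}_n(ω_{ℓ,i})}` (here `wF ℓ i`, `wC ℓ i`)
satisfy
`‖C^{ML}_n − C̄^{ML}_n‖_{L^p(Ω;𝓗⊗𝓗)} ≤ 4 Σ_ℓ ‖v^ℓ_n − v̄^ℓ_n‖_{L^{2p}} (‖v^ℓ_n‖_{L^{2p}} + ‖v̄^ℓ_n‖_{L^{2p}})`,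
where particles are identically distributed within each level (and the coarse level-`ℓ`
components are distributed as the fine level-`(ℓ−1)` ones, with `v^{−1} := 0`). -/
theorem stmt10
    {Ω : Type*} [MeasurableSpace Ω] (μ : Measure Ω) [IsProbabilityMeasure μ]
    {H : Type*} [NormedAddCommGroup H] [InnerProductSpace ℝ H] [CompleteSpace H]
    [MeasurableSpace H] [BorelSpace H] [SecondCountableTopology H]
    (e : HilbertBasis ℕ ℝ H)
    (p : ℝ) (hp : 2 ≤ p)
    (L : ℕ) (M : ℕ → ℕ) (hM : ∀ ℓ, 2 ≤ M ℓ)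
    -- the MLEnKF prediction particles (fine/coarse) and their mean-field shadows
    (vF vC wF wC : ℕ → ℕ → Ω → H)
    (hvC0 : ∀ i ω, vC 0 i ω = 0) (hwC0 : ∀ i ω, wC 0 i ω = 0)
    -- particles are identically distributed within each level
    (hid : ∀ ℓ i, IdentDistrib
      (fun ω => ((vF ℓ i ω, wF ℓ i ω), (vC ℓ i ω, wC ℓ i ω)))
      (fun ω => ((vF ℓ 0 ω, wF ℓ 0 ω), (vC ℓ 0 ω, wC ℓ 0 ω))) μ μ)
    -- the coarse components at level `ℓ ≥ 1` are distributed as the fine ones at `ℓ−1`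
    (hcoarse : ∀ ℓ, 1 ≤ ℓ → ∀ i, IdentDistrib
      (fun ω => (vC ℓ i ω, wC ℓ i ω))
      (fun ω => (vF (ℓ - 1) 0 ω, wF (ℓ - 1) 0 ω)) μ μ)
    -- finite `2p`-moments
    (hmomv : ∀ ℓ, MemLp (vF ℓ 0) (ENNReal.ofReal (2 * p)) μ)
    (hmomw : ∀ ℓ, MemLp (wF ℓ 0) (ENNReal.ofReal (2 * p)) μ)
    -- the two multilevel sample covariances
    (CML CbarML : Ω → H →L[ℝ] H)
    (hCML : ∀ ω, CML ω = ∑ ℓ ∈ Finset.range (L + 1),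
      (sampleCov (M ℓ) (fun i : Fin (M ℓ) => vF ℓ i) ω
        - sampleCov (M ℓ) (fun i : Fin (M ℓ) => vC ℓ i) ω))
    (hCbarML : ∀ ω, CbarML ω = ∑ ℓ ∈ Finset.range (L + 1),
      (sampleCov (M ℓ) (fun i : Fin (M ℓ) => wF ℓ i) ω
        - sampleCov (M ℓ) (fun i : Fin (M ℓ) => wC ℓ i) ω)) :
    lpNormHS μ e p (fun ω => CML ω - CbarML ω)
      ≤ 4 * ∑ ℓ ∈ Finset.range (L + 1),
          lpNorm μ (2 * p) (fun ω => vF ℓ 0 ω - wF ℓ 0 ω) *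
            (lpNorm μ (2 * p) (vF ℓ 0) + lpNorm μ (2 * p) (wF ℓ 0)) :=
  stmt10_general μ e p hp L M vF vC wF wC hvC0 hwC0 hid hcoarse hmomv hmomw CML CbarML hCML hCbarML
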